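/- arXiv:2105.13321 — 3 statements merged into one kernel-verified Lean document; each statement's English description precedes it below -/
import Mathlib

section
/- For x ∈ ℂ not of the form k + 1/2 with k ∈ ℤ, π tan(π x) = ∑_{k=0}^∞ (1/(k + 1/2 - x) - 1/(k + 1/2 + x)). -/
/-!
With `y = 1/2 - x` we have `tan (π x) = cot (π y)`, and the `k`-th term of the series becomes
`1/(y + k) + 1/(y - (k + 1))`. This is Mathlib's Mittag-Leffler term `cotTerm y k` plus the
telescoping difference `1/(y + k) - 1/(y + k + 1)`; the former sums to `π cot (π y) - 1/y`,
the latter to `1/y`.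
-/

open Filter Topology Complex

lemma Complex.cot_pi_div_two_sub (z : ℂ) : cot (Real.pi / 2 - z) = tan z := by
  rw [cot_eq_cos_div_sin, cos_pi_div_two_sub, sin_pi_div_two_sub, tan_eq_sin_div_cos]

lemma one_half_sub_mem_integerComplement {x : ℂ} (hx : ∀ k : ℤ, x ≠ (k : ℂ) + 1 / 2) :
    1 / 2 - x ∈ integerComplement := by
  rintro ⟨k, hk⟩
  exact hx (-k) (by push_cast; linear_combination hk)

lemma hasSum_cotTerm {y : ℂ} (hy : y ∈ integerComplement) :
    HasSum (cotTerm y) (Real.pi * cot (Real.pi * y) - 1 / y) :=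
  (summable_cotTerm hy).hasSum_iff_tendsto_nat.mpr (tendsto_logDeriv_euler_cot_sub hy)

lemma hasSum_one_div_add_sub_one_div_add_succ {y : ℂ} (hy : y ∈ integerComplement) :
    HasSum (fun k : ℕ => 1 / (y + k) - 1 / (y + (k + 1))) (1 / y) := by
  have hsum : Summable fun k : ℕ => 1 / (y + k) - 1 / (y + (k + 1)) := by
    refine ((EisensteinSeries.summable_linear_right_add_one_mul_linear_right y 1 1).comp_injective
      Nat.cast_injective).congr fun k => ?_
    have h0 : y + k ≠ 0 := by simpa using integerComplement_add_ne_zero hy k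
    have h1 : y + (k + 1) ≠ 0 := by simpa using integerComplement_add_ne_zero hy (k + 1)
    simp only [Function.comp_apply, Int.cast_one, one_mul, Int.cast_natCast, add_assoc]
    field_simp
    ring
  rw [hsum.hasSum_iff_tendsto_nat]
  have hpartial (n : ℕ) : ∑ k ∈ Finset.range n, (1 / (y + k) - 1 / (y + (k + 1))) =
      1 / y - 1 / (y + n) := by
    simpa using Finset.sum_range_sub' (fun k : ℕ => 1 / (y + k)) n
  have hlim : Tendsto (fun n : ℕ => 1 / (y + n)) atTop (𝓝 0) := by
    simp only [one_div]
    exact tendsto_inv₀_cobounded.comp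
      ((tendsto_const_add_cobounded y).comp tendsto_natCast_atTop_cobounded)
  simpa only [hpartial, sub_zero] using tendsto_const_nhds.sub hlim

lemma hasSum_pi_mul_tan {x : ℂ} (hx : ∀ k : ℤ, x ≠ (k : ℂ) + 1 / 2) :
    HasSum (fun k : ℕ => 1 / ((k : ℂ) + 1 / 2 - x) - 1 / ((k : ℂ) + 1 / 2 + x))
      (Real.pi * tan (Real.pi * x)) := by
  have hy := one_half_sub_mem_integerComplement hx
  convert (hasSum_cotTerm hy).add (hasSum_one_div_add_sub_one_div_add_succ hy) using 1
  · ext k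
    rw [cotTerm, show 1 / 2 - x - (k + 1) = -((k : ℂ) + 1 / 2 + x) by ring,
      one_div_neg_eq_neg_one_div]
    ring
  · rw [sub_add_cancel, ← cot_pi_div_two_sub, mul_sub, mul_one_div]

theorem pi_tan_eq_tsum (x : ℂ) (hx : ∀ k : ℤ, x ≠ (k : ℂ) + 1 / 2) :
    (Real.pi : ℂ) * Complex.tan (Real.pi * x) =
      ∑' k : ℕ, (1 / ((k : ℂ) + 1 / 2 - x) - 1 / ((k : ℂ) + 1 / 2 + x)) :=
  (hasSum_pi_mul_tan hx).tsum_eq.symm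
end

section
/- Suppose constants c₀ > 0, c₂ ≥ 0, c₃, c₄ > 0 are given, and (lγ) is a family of reals with lγ ≥ c₀ and counting function N(R) = #{γ : lγ ≤ R} ≤ c₃e^{c₄R}. Then for every T > 0 there exists c_T > 0 such that for all 0 < t ≤ T, ∑_γ e^{c₂ lγ} e^{-lγ²/(4t)} ≤ c_T · e^{-c₀²/(4t)}. -/
open Real

lemma summable_exp_quad (b d : ℝ) (hb : 0 < b) :
    Summable (fun n : ℕ => Real.exp (d * n - b * (n : ℝ) ^ 2)) := by
  have hgeom : Summable (fun n : ℕ => Real.exp ((d + 1) ^ 2 / (4 * b)) * Real.exp (-1) ^ n) :=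
    (summable_geometric_of_lt_one (Real.exp_pos _).le
      (by rw [Real.exp_lt_one_iff]; norm_num)).mul_left _
  refine hgeom.of_nonneg_of_le (fun n => (Real.exp_pos _).le) (fun n => ?_)
  have h1 : Real.exp ((d + 1) ^ 2 / (4 * b)) * Real.exp (-1) ^ n
      = Real.exp ((d + 1) ^ 2 / (4 * b) - n) := by
    rw [← Real.exp_nat_mul, ← Real.exp_add]
    ring_nf
  rw [h1]
  apply Real.exp_le_exp.mpr
  have key : d * n - b * (n : ℝ) ^ 2 + n ≤ (d + 1) ^ 2 / (4 * b) := by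
    rw [le_div_iff₀ (by positivity)]
    nlinarith [sq_nonneg (2 * b * (n : ℝ) - (d + 1))]
  linarith

theorem heat_sum_estimate {I : Type*} [Countable I]
    (l : I → ℝ) (c₀ c₂ c₃ c₄ : ℝ)
    (hc₀ : 0 < c₀) (hc₂ : 0 ≤ c₂) (hc₃ : 0 < c₃) (hc₄ : 0 < c₄)
    (hl : ∀ γ, c₀ ≤ l γ)
    (hfin : ∀ R : ℝ, {γ : I | l γ ≤ R}.Finite)
    (hN : ∀ R : ℝ, ({γ : I | l γ ≤ R}.ncard : ℝ) ≤ c₃ * Real.exp (c₄ * R)) :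
    ∀ T : ℝ, 0 < T → ∃ c_T : ℝ, 0 < c_T ∧ ∀ t : ℝ, 0 < t → t ≤ T →
      Summable (fun γ : I => Real.exp (c₂ * l γ) * Real.exp (-(l γ) ^ 2 / (4 * t))) ∧
      ∑' γ : I, Real.exp (c₂ * l γ) * Real.exp (-(l γ) ^ 2 / (4 * t)) ≤
        c_T * Real.exp (-c₀ ^ 2 / (4 * t)) := by
  classical
  intro T hT
  -- the T-dependent majorant
  set g : I → ℝ := fun γ => Real.exp (c₂ * l γ + (c₀ ^ 2 - (l γ) ^ 2) / (4 * T)) with hg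
  -- per-annulus bound on g
  set H : ℕ → ℝ := fun n =>
    Real.exp (c₂ * (c₀ + n + 1) + (c₀ ^ 2 - (n : ℝ) ^ 2) / (4 * T)) with hH
  set A : ℕ → ℝ := fun n => c₃ * Real.exp (c₄ * (c₀ + n + 1)) * H n with hA
  have hA_nonneg : ∀ n, 0 ≤ A n := fun n => by positivity
  have hA_summable : Summable A := by
    have hs := (summable_exp_quad (1 / (4 * T)) (c₄ + c₂) (by positivity)).mul_left
      (c₃ * Real.exp ((c₄ + c₂) * (c₀ + 1) + c₀ ^ 2 / (4 * T)))
    refine hs.congr fun n => ?_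
    simp only [hA, hH, mul_assoc, ← Real.exp_add]
    congr 1
    rw [Real.exp_eq_exp]
    field_simp
    ring
  -- the annulus map
  set φ : I → ℕ := fun γ => ⌊l γ - c₀⌋₊ with hφ
  have hφ_bounds : ∀ γ : I, (φ γ : ℝ) + c₀ ≤ l γ ∧ l γ ≤ c₀ + φ γ + 1 := by
    intro γ
    have h0 : 0 ≤ l γ - c₀ := by linarith [hl γ]
    have h1 : (φ γ : ℝ) ≤ l γ - c₀ := Nat.floor_le h0
    have h2 : l γ - c₀ < φ γ + 1 := Nat.lt_floor_add_one _
    constructor <;> linarith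
  -- bound on finite sums of g
  have key : ∀ s : Finset I, ∑ γ ∈ s, g γ ≤ ∑' n, A n := by
    intro s
    have hfib : ∑ n ∈ s.image φ, ∑ γ ∈ s.filter (fun γ => φ γ = n), g γ = ∑ γ ∈ s, g γ :=
      Finset.sum_fiberwise_of_maps_to (fun γ hγ => Finset.mem_image_of_mem φ hγ) g
    rw [← hfib]
    have hstep : ∀ n ∈ s.image φ, ∑ γ ∈ s.filter (fun γ => φ γ = n), g γ ≤ A n := by
      intro n _
      set tn := s.filter (fun γ => φ γ = n) with htn
      have hbound : ∀ γ ∈ tn, g γ ≤ H n := by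
        intro γ hγ
        have hφγ : φ γ = n := (Finset.mem_filter.mp hγ).2
        obtain ⟨hlo, hhi⟩ := hφ_bounds γ
        rw [hφγ] at hlo hhi
        apply Real.exp_le_exp.mpr
        have hn2 : (n : ℝ) ^ 2 ≤ (l γ) ^ 2 := by nlinarith [hc₀.le, Nat.cast_nonneg (α := ℝ) n]
        have hdiv : (c₀ ^ 2 - (l γ) ^ 2) / (4 * T) ≤ (c₀ ^ 2 - (n : ℝ) ^ 2) / (4 * T) := by
          apply div_le_div_of_nonneg_right _ (by positivity)
          · linarith
        have hc2 : c₂ * l γ ≤ c₂ * (c₀ + n + 1) := mul_le_mul_of_nonneg_left hhi hc₂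
        linarith
      have hsum : ∑ γ ∈ tn, g γ ≤ tn.card • H n := Finset.sum_le_card_nsmul _ _ _ hbound
      have hsub : tn ⊆ (hfin (c₀ + n + 1)).toFinset := by
        intro γ hγ
        have hφγ : φ γ = n := (Finset.mem_filter.mp hγ).2
        obtain ⟨_, hhi⟩ := hφ_bounds γ
        rw [hφγ] at hhi
        simp only [Set.Finite.mem_toFinset, Set.mem_setOf_eq]
        linarith
      have hcard : (tn.card : ℝ) ≤ c₃ * Real.exp (c₄ * (c₀ + n + 1)) := by
        calc (tn.card : ℝ) ≤ ((hfin (c₀ + n + 1)).toFinset.card : ℝ) := by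
              exact_mod_cast Finset.card_le_card hsub
          _ = ({γ : I | l γ ≤ c₀ + n + 1}.ncard : ℝ) := by
              rw [Set.ncard_eq_toFinset_card _ (hfin (c₀ + n + 1))]
          _ ≤ c₃ * Real.exp (c₄ * (c₀ + n + 1)) := hN _
      calc ∑ γ ∈ tn, g γ ≤ tn.card • H n := hsum
        _ = (tn.card : ℝ) * H n := by rw [nsmul_eq_mul]
        _ ≤ c₃ * Real.exp (c₄ * (c₀ + n + 1)) * H n :=
            mul_le_mul_of_nonneg_right hcard (Real.exp_pos _).le
        _ = A n := rfl
    calc ∑ n ∈ s.image φ, ∑ γ ∈ s.filter (fun γ => φ γ = n), g γ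
        ≤ ∑ n ∈ s.image φ, A n := Finset.sum_le_sum hstep
      _ ≤ ∑' n, A n := Summable.sum_le_tsum _ (fun n _ => hA_nonneg n) hA_summable
  have hg_summable : Summable g :=
    summable_of_sum_le (fun γ => (Real.exp_pos _).le) key
  have hg_nonneg : 0 ≤ ∑' γ, g γ := tsum_nonneg fun γ => (Real.exp_pos _).le
  refine ⟨∑' γ, g γ + 1, by linarith, ?_⟩
  intro t ht htT
  have hptwise : ∀ γ : I, Real.exp (c₂ * l γ) * Real.exp (-(l γ) ^ 2 / (4 * t)) ≤
      Real.exp (-c₀ ^ 2 / (4 * t)) * g γ := by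
    intro γ
    rw [← Real.exp_add, hg, ← Real.exp_add]
    apply Real.exp_le_exp.mpr
    have ha : c₀ ^ 2 - (l γ) ^ 2 ≤ 0 := by nlinarith [hl γ, hc₀]
    have hinv : (4 * T)⁻¹ ≤ (4 * t)⁻¹ := inv_anti₀ (by positivity) (by linarith)
    have hmul : (c₀ ^ 2 - (l γ) ^ 2) * (4 * t)⁻¹ ≤ (c₀ ^ 2 - (l γ) ^ 2) * (4 * T)⁻¹ :=
      mul_le_mul_of_nonpos_left hinv ha
    have heq1 : -(l γ) ^ 2 / (4 * t) = -c₀ ^ 2 / (4 * t) + (c₀ ^ 2 - (l γ) ^ 2) * (4 * t)⁻¹ := by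
      field_simp
      ring
    have heq2 : (c₀ ^ 2 - (l γ) ^ 2) / (4 * T) = (c₀ ^ 2 - (l γ) ^ 2) * (4 * T)⁻¹ := by
      rw [div_eq_mul_inv]
    linarith
  have hterm_summable :
      Summable (fun γ : I => Real.exp (c₂ * l γ) * Real.exp (-(l γ) ^ 2 / (4 * t))) := by
    refine (hg_summable.mul_left (Real.exp (-c₀ ^ 2 / (4 * t)))).of_nonneg_of_le
      (fun γ => by positivity) hptwise
  refine ⟨hterm_summable, ?_⟩
  calc ∑' γ : I, Real.exp (c₂ * l γ) * Real.exp (-(l γ) ^ 2 / (4 * t))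
      ≤ ∑' γ : I, Real.exp (-c₀ ^ 2 / (4 * t)) * g γ :=
        Summable.tsum_le_tsum hptwise hterm_summable (hg_summable.mul_left _)
    _ = Real.exp (-c₀ ^ 2 / (4 * t)) * ∑' γ, g γ := tsum_mul_left
    _ ≤ (∑' γ, g γ + 1) * Real.exp (-c₀ ^ 2 / (4 * t)) := by
        rw [mul_comm]
        exact mul_le_mul_of_nonneg_right (by linarith) (Real.exp_pos _).le
end

section
/- As ε → 0⁺, the integral A(-ε) = -2π ∫₀^{1/2 - ε} r tan(π r) dr satisfies exp(A(-ε)) ~ 2πε; more precisely, A(-ε) = log(2πε) + o(1) as ε → 0⁺. -/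
/-!
Integrating by parts against `d/dr log cos (π r) = -π tan (π r)`, and using
`cos (π (1/2 - ε)) = sin (π ε)`,
`A(-ε) = (1 - 2ε) log sin (π ε) - 2 ∫₀^{1/2-ε} log cos (π r) dr`.
As `ε → 0⁺`, `log sin (π ε) = log (π ε) + o(1)`, `ε log (π ε) → 0`, and the last integral, whose
integrand has only a logarithmic singularity at `1/2`, tends to
`∫₀^{1/2} log cos (π r) dr = -(log 2)/2` (Euler's `∫₀^{π/2} log sin = -(π/2) log 2`).
Hence `A(-ε) = log (π ε) + log 2 + o(1)`.
-/

open Real Filter Topology intervalIntegral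

theorem integral_log_cos_zero_pi_div_two : ∫ x in 0..(π / 2), log (cos x) = -log 2 * π / 2 := by
  have h := integral_comp_sub_left (a := 0) (b := π / 2) (fun x ↦ log (sin x)) (π / 2)
  simp only [sin_pi_div_two_sub, sub_self, sub_zero] at h
  rw [h, integral_log_sin_zero_pi_div_two]

theorem integral_log_cos_pi_mul_zero_half : ∫ r in 0..(1 / 2), log (cos (π * r)) = -log 2 / 2 := by
  rw [integral_comp_mul_left (fun x ↦ log (cos x)) pi_ne_zero, mul_zero, mul_one_div,
    integral_log_cos_zero_pi_div_two, smul_eq_mul]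
  field_simp

theorem continuous_integral_log_cos_mul (c : ℝ) :
    Continuous fun x ↦ ∫ r in 0..x, log (cos (c * r)) := by
  refine continuous_primitive (fun a b ↦ ?_) 0
  rcases eq_or_ne c 0 with rfl | hc
  · simp
  · simpa [hc] using (intervalIntegrable_log_cos (a := c * a) (b := c * b)).comp_mul_left (c := c)

theorem hasDerivAt_log_cos_mul {c r : ℝ} (h : cos (c * r) ≠ 0) :
    HasDerivAt (fun r ↦ log (cos (c * r))) (-c * tan (c * r)) r := by
  refine (((hasDerivAt_id' r).const_mul c).cos.log (by simpa using h)).congr_deriv ?_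
  rw [tan_eq_sin_div_cos]
  ring

theorem mul_integral_mul_tan_mul {c x : ℝ} (hx : |c * x| < π / 2) :
    c * ∫ r in 0..x, r * tan (c * r) = (∫ r in 0..x, log (cos (c * r))) - x * log (cos (c * x)) := by
  have hcos : ∀ r ∈ Set.uIcc 0 x, 0 < cos (c * r) := fun r hr ↦ by
    refine cos_pos_of_mem_Ioo (abs_lt.mp (lt_of_le_of_lt ?_ hx))
    rw [abs_mul, abs_mul]
    exact mul_le_mul_of_nonneg_left (by simpa using Set.abs_sub_left_of_mem_uIcc hr) (abs_nonneg c)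
  have htan : IntervalIntegrable (fun r ↦ -c * tan (c * r)) MeasureTheory.volume 0 x :=
    ContinuousOn.intervalIntegrable fun r hr ↦
      (continuousAt_const.mul ((continuousAt_tan.2 (hcos r hr).ne').comp
        (continuous_const_mul c).continuousAt)).continuousWithinAt
  have := integral_mul_deriv_eq_deriv_mul (fun r _ ↦ hasDerivAt_id' r)
    (fun r hr ↦ hasDerivAt_log_cos_mul (hcos r hr).ne') intervalIntegrable_const htan
  simp only [mul_left_comm _ (-c), integral_const_mul, one_mul, zero_mul, sub_zero] at this
  linarith

theorem neg_two_pi_mul_integral_mul_tan_pi_mul {ε : ℝ} (hε₀ : 0 < ε) (hε₁ : ε < 1 / 2) :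
    -2 * π * ∫ r in 0..(1 / 2 - ε), r * tan (π * r)
      = (1 - 2 * ε) * log (sin (π * ε)) - 2 * ∫ r in 0..(1 / 2 - ε), log (cos (π * r)) := by
  have hx : |π * (1 / 2 - ε)| < π / 2 := by
    rw [abs_of_pos (by nlinarith [pi_pos])]
    nlinarith [pi_pos]
  have hcos : cos (π * (1 / 2 - ε)) = sin (π * ε) := by
    rw [← cos_pi_div_two_sub]
    ring_nf
  have hibp := mul_integral_mul_tan_mul hx
  rw [hcos] at hibp
  linear_combination -2 * hibp

theorem log_sin_eq_log_add_log_sinc {x : ℝ} (hx₀ : 0 < x) (hx : x < π) :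
    log (sin x) = log x + log (sinc x) := by
  rw [sinc_of_ne_zero hx₀.ne', ← log_mul hx₀.ne' (div_ne_zero (sin_pos_of_pos_of_lt_pi hx₀ hx).ne'
    hx₀.ne'), mul_div_cancel₀ _ hx₀.ne']

theorem tendsto_log_sinc_mul_nhds_zero (c : ℝ) :
    Tendsto (fun x ↦ log (sinc (c * x))) (𝓝 0) (𝓝 0) := by
  simpa using ((continuous_sinc.comp (continuous_const_mul c)).tendsto 0).log (by simp)

theorem tendsto_mul_log_const_mul_nhds_zero (c : ℝ) :
    Tendsto (fun x ↦ x * log (c * x)) (𝓝 0) (𝓝 0) := by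
  rcases eq_or_ne c 0 with rfl | hc
  · simp
  · simpa [Function.comp_def, mul_assoc, hc] using
      ((continuous_mul_log.comp (continuous_const_mul c)).tendsto 0).const_mul c⁻¹

theorem ruelle_integral_asymptotics :
    Filter.Tendsto (fun ε : ℝ =>
        (-2 * Real.pi * ∫ r in (0 : ℝ)..(1 / 2 - ε), r * Real.tan (Real.pi * r)) -
          Real.log (2 * Real.pi * ε))
      (nhdsWithin 0 (Set.Ioi 0)) (nhds 0) := by
  have hJ : Tendsto (fun ε ↦ ∫ r in 0..(1 / 2 - ε), log (cos (π * r))) (𝓝 0) (𝓝 (-log 2 / 2)) := by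
    have := ((continuous_integral_log_cos_mul π).comp (continuous_sub_left (1 / 2))).tendsto 0
    simp only [Function.comp_def, sub_zero] at this
    rwa [integral_log_cos_pi_mul_zero_half] at this
  have hlim : Tendsto (fun ε ↦ (1 - 2 * ε) * log (sinc (π * ε)) - 2 * (ε * log (π * ε))
      - 2 * (∫ r in 0..(1 / 2 - ε), log (cos (π * r))) - log 2) (𝓝 0) (𝓝 0) := by
    convert (((((by fun_prop : Continuous fun ε : ℝ ↦ 1 - 2 * ε).tendsto 0).mul
      (tendsto_log_sinc_mul_nhds_zero π)).sub ((tendsto_mul_log_const_mul_nhds_zero π).const_mul 2)).sub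
      (hJ.const_mul 2)).sub_const (log 2) using 2
    ring
  refine (hlim.mono_left nhdsWithin_le_nhds).congr' ?_
  filter_upwards [Ioo_mem_nhdsGT (show (0 : ℝ) < 1 / 2 by norm_num)] with ε ⟨hε₀, hε₁⟩
  have hπε : 0 < π * ε := by positivity
  rw [neg_two_pi_mul_integral_mul_tan_pi_mul hε₀ hε₁,
    log_sin_eq_log_add_log_sinc hπε (by nlinarith [pi_pos]), mul_assoc 2,
    log_mul two_ne_zero hπε.ne']
  ring
end
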